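/- Correctness of the LRS-to-LPF conversion rule: for every string T = T[1..n] and every i with 2 ≤ i ≤ n such that LRS[i] ≤ LRS[i−1], every position j with i − LRS[i−1] ≤ j ≤ i − LRS[i] satisfies LPF[j] = i − j. -/

import Mathlib

/-!
A suffix `T[i−ℓ+1..i]` of `T[1..i]` occurs twice in `T[1..i]` exactly when it occurs in `T` at a
position before `i − ℓ + 1`. So LRS and LPF are both governed by "the factor has a previous
occurrence", a property inherited by prefixes and by suffixes of a factor. With `r = LRS[i−1]`, the
factor `T[i−r..i−1]` has a previous occurrence, hence so does its suffix `T[j..i−1]`; and a previous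
occurrence of `T[j..i]` would make the suffix of `T[1..i]` of length `i − j + 1 > LRS[i]` repeat.
-/

variable {α : Type*}

/-- `occursAt T S p`: the string `S` occurs at the 1-based position `p` in `T`,
i.e. `1 ≤ p ≤ |T| − |S| + 1` and `T[p..p+|S|−1] = S`. -/
def occursAt (T S : List α) (p : ℕ) : Prop :=
  1 ≤ p ∧ p + S.length ≤ T.length + 1 ∧ (T.drop (p - 1)).take S.length = S

/-- `#occ_T(S)`: the number of positions at which `S` occurs in `T`. -/
noncomputable def occCount (T S : List α) : ℕ :=
  {p : ℕ | occursAt T S p}.ncard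

/-- `sub T i ℓ = T[i..i+ℓ−1]` (1-based substring of length `ℓ` starting at `i`). -/
def sub (T : List α) (i ℓ : ℕ) : List α := (T.drop (i - 1)).take ℓ

/-- Longest previous factor array (1-based): `LPF T i` is the largest `ℓ ≥ 0` such that
the prefix `T[i..i+ℓ−1]` of `T[i..n]` also occurs at some position `j < i` in `T`. -/
noncomputable def LPF (T : List α) (i : ℕ) : ℕ :=
  @Nat.findGreatest
    (fun ℓ => (i - 1) + ℓ ≤ T.length ∧ ∃ j, 1 ≤ j ∧ j < i ∧ occursAt T (sub T i ℓ) j)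
    (Classical.decPred _) T.length

/-- Longest repeating suffix array (1-based): `LRS T i` is the length of the longest
suffix of `T[1..i]` occurring at least twice in `T[1..i]`. -/
noncomputable def LRS (T : List α) (i : ℕ) : ℕ :=
  @Nat.findGreatest
    (fun ℓ => 2 ≤ occCount (T.take i) ((T.take i).drop (i - ℓ)))
    (Classical.decPred _) i

theorem occursAt.take {T S : List α} {p : ℕ} (h : occursAt T S p) (m : ℕ) :
    occursAt T (S.take m) p := by
  obtain ⟨hp, hlen, hS⟩ := h
  refine ⟨hp, by grind, ?_⟩
  conv_rhs => rw [← hS]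
  rw [List.take_take, List.length_take]

theorem occursAt.drop {T S : List α} {p d : ℕ} (h : occursAt T S p) (hd : d ≤ S.length) :
    occursAt T (S.drop d) (p + d) := by
  obtain ⟨hp, hlen, hS⟩ := h
  refine ⟨by omega, by grind, ?_⟩
  conv_rhs => rw [← hS]
  rw [List.drop_take, List.drop_drop, List.length_drop, show p + d - 1 = p - 1 + d by omega]

theorem occursAt_take_iff {T S : List α} {i p : ℕ} (hi : i ≤ T.length) :
    occursAt (T.take i) S p ↔ occursAt T S p ∧ p + S.length ≤ i + 1 := by
  have hlen : (T.take i).length = i := List.length_take_of_le hi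
  unfold occursAt
  rw [hlen, List.drop_take, List.take_take]
  constructor
  · rintro ⟨hp, hend, hS⟩
    rw [min_eq_left (by omega)] at hS
    exact ⟨⟨hp, by omega, hS⟩, hend⟩
  · rintro ⟨⟨hp, -, hS⟩, hend⟩
    rw [min_eq_left (by omega)]
    exact ⟨hp, hend, hS⟩

theorem length_sub {T : List α} {j ℓ : ℕ} (h : j - 1 + ℓ ≤ T.length) :
    (sub T j ℓ).length = ℓ := by
  simp only [sub, List.length_take, List.length_drop]
  omega

theorem occursAt_sub {T : List α} {j ℓ : ℕ} (hj : 1 ≤ j) (h : j - 1 + ℓ ≤ T.length) :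
    occursAt T (sub T j ℓ) j :=
  ⟨hj, by rw [length_sub h]; omega, by rw [length_sub h]; rfl⟩

theorem take_drop_eq_sub (T : List α) {i ℓ : ℕ} (hℓ : ℓ ≤ i) :
    (T.take i).drop (i - ℓ) = sub T (i - ℓ + 1) ℓ := by
  rw [List.drop_take, sub, Nat.add_sub_cancel, Nat.sub_sub_self hℓ]

theorem two_le_occCount_iff {T S : List α} :
    2 ≤ occCount T S ↔ ∃ a b, occursAt T S a ∧ occursAt T S b ∧ a ≠ b := by
  have hfin : {p | occursAt T S p}.Finite :=
    (Set.finite_Iic (T.length + 1)).subset fun p hp => by grind [occursAt]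
  exact Nat.succ_le_iff.trans (Set.one_lt_ncard_iff hfin)

def HasPrevOcc (T : List α) (j ℓ : ℕ) : Prop :=
  ∃ k < j, occursAt T (sub T j ℓ) k

theorem HasPrevOcc.of_le {T : List α} {j ℓ m : ℕ} (h : HasPrevOcc T j m) (hℓ : ℓ ≤ m) :
    HasPrevOcc T j ℓ := by
  obtain ⟨k, hk, hocc⟩ := h
  refine ⟨k, hk, ?_⟩
  simpa only [sub, List.take_take, min_eq_left hℓ] using hocc.take ℓ

theorem HasPrevOcc.suffix {T : List α} {j ℓ j' ℓ' : ℕ} (h : HasPrevOcc T j ℓ)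
    (hT : j - 1 + ℓ ≤ T.length) (hj : j ≤ j') (hend : j' + ℓ' = j + ℓ) :
    HasPrevOcc T j' ℓ' := by
  obtain ⟨k, hk, hocc⟩ := h
  have hk1 : 1 ≤ k := hocc.1
  have hsub : sub T j' ℓ' = (sub T j ℓ).drop (j' - j) := by
    rw [sub, sub, List.drop_take, List.drop_drop]
    congr 2 <;> omega
  refine ⟨k + (j' - j), by omega, ?_⟩
  rw [hsub]
  exact hocc.drop (by rw [length_sub hT]; omega)

theorem two_le_occCount_suffix_iff {T : List α} {i ℓ : ℕ} (hi : i ≤ T.length) (hℓ : ℓ ≤ i) :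
    2 ≤ occCount (T.take i) ((T.take i).drop (i - ℓ)) ↔ HasPrevOcc T (i - ℓ + 1) ℓ := by
  have hlen : (sub T (i - ℓ + 1) ℓ).length = ℓ := length_sub (by omega)
  have hself : occursAt T (sub T (i - ℓ + 1) ℓ) (i - ℓ + 1) := occursAt_sub (by omega) (by omega)
  rw [take_drop_eq_sub T hℓ, two_le_occCount_iff]
  simp only [occursAt_take_iff hi, hlen]
  constructor
  · rintro ⟨a, b, ⟨ha, ha'⟩, ⟨hb, hb'⟩, hab⟩
    rcases Nat.lt_or_gt_of_ne hab with hlt | hlt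
    exacts [⟨a, by omega, ha⟩, ⟨b, by omega, hb⟩]
  · rintro ⟨k, hk, hocc⟩
    exact ⟨k, i - ℓ + 1, ⟨hocc, by omega⟩, ⟨hself, by omega⟩, by omega⟩

theorem LRS_le (T : List α) (i : ℕ) : LRS T i ≤ i :=
  @Nat.findGreatest_le _ (Classical.decPred _) i

theorem hasPrevOcc_LRS {T : List α} {i : ℕ} (hi : i ≤ T.length) (h0 : LRS T i ≠ 0) :
    HasPrevOcc T (i - LRS T i + 1) (LRS T i) :=
  (two_le_occCount_suffix_iff hi (LRS_le T i)).mp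
    (@Nat.findGreatest_of_ne_zero (LRS T i) _ (Classical.decPred _) i rfl h0)

theorem le_LRS_of_hasPrevOcc {T : List α} {i j ℓ : ℕ} (hi : i ≤ T.length) (hend : j + ℓ = i + 1)
    (h : HasPrevOcc T j ℓ) : ℓ ≤ LRS T i := by
  obtain ⟨k, hk, hocc⟩ := h
  have hk1 : 1 ≤ k := hocc.1
  have hj : j = i - ℓ + 1 := by omega
  subst hj
  exact @Nat.le_findGreatest ℓ _ (Classical.decPred _) i (by omega)
    ((two_le_occCount_suffix_iff hi (by omega)).mpr ⟨k, hk, hocc⟩)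

theorem LPF_eq {T : List α} {j ℓ : ℕ} (hlen : j - 1 + ℓ ≤ T.length)
    (hprev : ℓ ≠ 0 → HasPrevOcc T j ℓ) (hnext : ¬HasPrevOcc T j (ℓ + 1)) : LPF T j = ℓ := by
  rw [LPF, @Nat.findGreatest_eq_iff ℓ T.length _ (Classical.decPred _)]
  refine ⟨by omega, fun hℓ => ?_, fun m hm _ ⟨_, k, _, hk, hocc⟩ => hnext ?_⟩
  · obtain ⟨k, hk, hocc⟩ := hprev hℓ
    exact ⟨hlen, k, hocc.1, hk, hocc⟩
  · exact HasPrevOcc.of_le ⟨k, hk, hocc⟩ hm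

theorem lrs_to_lpf_rule_general (T : List α) (i : ℕ) (h2 : i ≤ T.length) :
    ∀ j, i - LRS T (i - 1) ≤ j → j ≤ i - LRS T i → LPF T j = i - j := by
  intro j hj_lo hj_hi
  have hr := LRS_le T (i - 1)
  refine LPF_eq (by omega) (fun hij => ?_) (fun hnext => ?_)
  · have hprev := hasPrevOcc_LRS (T := T) (i := i - 1) (by omega) (by omega)
    exact hprev.suffix (by omega) (by omega) (by omega)
  · have hlong := le_LRS_of_hasPrevOcc h2 (by omega) hnext
    have hs := LRS_le T i
    omega

/-- correctness of the LRS-to-LPF conversion rule: for every `i` with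
`2 ≤ i ≤ n` such that `LRS[i] ≤ LRS[i−1]`, every position `j` with
`i − LRS[i−1] ≤ j ≤ i − LRS[i]` satisfies `LPF[j] = i − j`. -/
theorem lrs_to_lpf_rule (T : List α) (i : ℕ) (h1 : 2 ≤ i) (h2 : i ≤ T.length)
    (h : LRS T i ≤ LRS T (i - 1)) :
    ∀ j, i - LRS T (i - 1) ≤ j → j ≤ i - LRS T i → LPF T j = i - j :=
  lrs_to_lpf_rule_general T i h2
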